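/- arXiv:1808.08153 — 2 statements merged into one kernel-verified Lean document; each statement's English description precedes it below -/
import Mathlib

section
/- Let R̂ be a real m × m' matrix with singular value decomposition R̂ = Σ_k σ_k u_k v_kᵀ (σ_1 ≥ σ_2 ≥ … ≥ 0), let α > 0, and let R̃(α) = Σ_k σ_k 1(σ_k > α) u_k v_kᵀ be the spectral hard threshold of R̂ at level α. Then R̃(α) minimizes the rank-penalized criterion: for every real m × m' matrix S, ‖R̂ − R̃(α)‖_F² + α² rank(R̃(α)) ≤ ‖R̂ − S‖_F² + α² rank(S). -/
/-!
Let `V` be the row space of `S`, so `dim V ≤ rank S`, and let `d_k = ‖P_V v_k‖² ∈ [0, 1]`.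
Projecting the rows of `R̂ - S` onto `Vᗮ` kills `S`, which gives
`‖R̂ - S‖_F² ≥ Σ_k σ_k² (1 - d_k)`, and Bessel's inequality against an orthonormal basis of `V`
gives `Σ_k d_k ≤ dim V`. So the criterion at `S` is at least
`Σ_k (σ_k² (1 - d_k) + α² d_k) ≥ Σ_k min (σ_k², α²)`. The hard threshold pays `σ_k²` for each
discarded `σ_k ≤ α` and at most `α²` for each kept `σ_k > α`, so its criterion is at most that sum.
-/

open Finset Module WithLp Submodule

noncomputable section

/-- Squared Frobenius norm of a real matrix. -/
def frobSq {m m' : ℕ} (A : Matrix (Fin m) (Fin m') ℝ) : ℝ :=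
  ∑ i, ∑ j, A i j ^ 2

theorem min_le_mul_one_sub_add_mul (a b : ℝ) {d : ℝ} (hd₀ : 0 ≤ d) (hd₁ : d ≤ 1) :
    min a b ≤ a * (1 - d) + b * d := by
  nlinarith [min_le_left a b, min_le_right a b]

theorem orthonormal_toLp_iff {ι κ : Type*} [Fintype ι] [DecidableEq κ] (u : κ → ι → ℝ) :
    Orthonormal ℝ (fun k => (toLp 2 (u k) : EuclideanSpace ℝ ι)) ↔
      ∀ k l, ∑ i, u k i * u l i = if k = l then 1 else 0 := by
  simp only [orthonormal_iff_ite, EuclideanSpace.inner_toLp_toLp, dotProduct, star_trivial,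
    mul_comm]

section InnerProductSpace

variable {E : Type*} [NormedAddCommGroup E] [InnerProductSpace ℝ E]

theorem sum_norm_sq_sum_smul_of_orthonormal {ι κ : Type*} [Fintype ι] [Fintype κ]
    {u : κ → ι → ℝ} (hu : Orthonormal ℝ (fun k => (toLp 2 (u k) : EuclideanSpace ℝ ι)))
    (y : κ → E) :
    ∑ i, ‖∑ k, u k i • y k‖ ^ 2 = ∑ k, ‖y k‖ ^ 2 := by
  classical
  rw [orthonormal_toLp_iff] at hu
  calc ∑ i, ‖∑ k, u k i • y k‖ ^ 2
      = ∑ k, ∑ l, (∑ i, u k i * u l i) * inner ℝ (y k) (y l) := by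
        simp only [← real_inner_self_eq_norm_sq, sum_inner, inner_sum, real_inner_smul_left,
          real_inner_smul_right, sum_mul]
        rw [sum_comm]
        refine sum_congr rfl fun k _ => ?_
        rw [sum_comm]
        exact sum_congr rfl fun l _ => sum_congr rfl fun i _ => by rw [real_inner_comm]; ring
    _ = ∑ k, ‖y k‖ ^ 2 := by simp [hu]

theorem sum_norm_sq_starProjection_le_finrank (V : Submodule ℝ E) [FiniteDimensional ℝ V]
    {κ : Type*} [Fintype κ] {v : κ → E} (hv : Orthonormal ℝ v) :
    ∑ k, ‖V.starProjection (v k)‖ ^ 2 ≤ finrank ℝ V := by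
  set b := stdOrthonormalBasis ℝ V
  have hproj : ∀ x, ‖V.starProjection x‖ ^ 2 = ∑ l, inner ℝ x (b l : E) ^ 2 := fun x => by
    rw [starProjection_apply, ← coe_norm, ← b.sum_sq_inner_left]
    simp only [inner_orthogonalProjectionOnto_eq_of_mem_right]
  calc ∑ k, ‖V.starProjection (v k)‖ ^ 2
      = ∑ l, ∑ k, inner ℝ (v k) (b l : E) ^ 2 := by simp only [hproj]; exact sum_comm
    _ ≤ ∑ l, ‖(b l : E)‖ ^ 2 := sum_le_sum fun l _ => by
        simpa only [Real.norm_eq_abs, sq_abs] using hv.sum_inner_products_le (b l : E) (s := univ)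
    _ = finrank ℝ V := by simp [← coe_norm, b.norm_eq_one]

theorem norm_sq_starProjection_orthogonal_le {V : Submodule ℝ E} [V.HasOrthogonalProjection]
    (x : E) {s : E} (hs : s ∈ V) :
    ‖Vᗮ.starProjection x‖ ^ 2 ≤ ‖x - s‖ ^ 2 := by
  have hsub : Vᗮ.starProjection (x - s) = Vᗮ.starProjection x := by
    rw [map_sub, starProjection_orthogonal_apply_eq_zero hs, sub_zero]
  rw [V.norm_sq_eq_add_norm_sq_starProjection (x - s), hsub]
  exact le_add_of_nonneg_left (sq_nonneg _)

theorem sum_sq_mul_norm_sq_starProjection_orthogonal_le {ι κ : Type*} [Fintype ι] [Fintype κ]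
    {u : κ → ι → ℝ} (hu : Orthonormal ℝ (fun k => (toLp 2 (u k) : EuclideanSpace ℝ ι)))
    (σ : κ → ℝ) (v : κ → E) {V : Submodule ℝ E} [V.HasOrthogonalProjection]
    (s : ι → E) (hs : ∀ i, s i ∈ V) :
    ∑ k, σ k ^ 2 * ‖Vᗮ.starProjection (v k)‖ ^ 2 ≤ ∑ i, ‖∑ k, (σ k * u k i) • v k - s i‖ ^ 2 :=
  calc ∑ k, σ k ^ 2 * ‖Vᗮ.starProjection (v k)‖ ^ 2
      = ∑ i, ‖Vᗮ.starProjection (∑ k, (σ k * u k i) • v k)‖ ^ 2 := by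
        simp only [map_sum, map_smul, mul_comm (σ _), mul_smul,
          sum_norm_sq_sum_smul_of_orthonormal hu, norm_smul, mul_pow, Real.norm_eq_abs, sq_abs]
    _ ≤ ∑ i, ‖∑ k, (σ k * u k i) • v k - s i‖ ^ 2 :=
        sum_le_sum fun i _ => norm_sq_starProjection_orthogonal_le _ (hs i)

theorem sum_min_sq_le_sum_norm_sq_sub_add_finrank {ι κ : Type*} [Fintype ι] [Fintype κ]
    {u : κ → ι → ℝ} (hu : Orthonormal ℝ (fun k => (toLp 2 (u k) : EuclideanSpace ℝ ι)))
    {v : κ → E} (hv : Orthonormal ℝ v) (σ : κ → ℝ) (α : ℝ)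
    (V : Submodule ℝ E) [FiniteDimensional ℝ V] (s : ι → E) (hs : ∀ i, s i ∈ V) :
    ∑ k, min (σ k ^ 2) (α ^ 2) ≤
      ∑ i, ‖∑ k, (σ k * u k i) • v k - s i‖ ^ 2 + α ^ 2 * finrank ℝ V := by
  set d : κ → ℝ := fun k => ‖V.starProjection (v k)‖ ^ 2
  have hpyth : ∀ k, ‖Vᗮ.starProjection (v k)‖ ^ 2 = 1 - d k := fun k => by
    rw [eq_sub_iff_add_eq', ← V.norm_sq_eq_add_norm_sq_starProjection, hv.norm_eq_one, one_pow]
  have hd₁ : ∀ k, d k ≤ 1 := fun k => by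
    linarith [hpyth k, sq_nonneg ‖Vᗮ.starProjection (v k)‖]
  calc ∑ k, min (σ k ^ 2) (α ^ 2)
      ≤ ∑ k, (σ k ^ 2 * (1 - d k) + α ^ 2 * d k) :=
        sum_le_sum fun k _ => min_le_mul_one_sub_add_mul _ _ (sq_nonneg _) (hd₁ k)
    _ = ∑ k, σ k ^ 2 * ‖Vᗮ.starProjection (v k)‖ ^ 2 + α ^ 2 * ∑ k, d k := by
        simp only [hpyth, sum_add_distrib, mul_sum]
    _ ≤ ∑ i, ‖∑ k, (σ k * u k i) • v k - s i‖ ^ 2 + α ^ 2 * finrank ℝ V := by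
        gcongr
        · exact sum_sq_mul_norm_sq_starProjection_orthogonal_le hu σ v s hs
        · exact sum_norm_sq_starProjection_le_finrank V hv

end InnerProductSpace

theorem Matrix.rank_le_card_of_row_mem_span {R m n κ : Type*} [Field R] [Finite m] [Fintype n]
    (A : Matrix m n R) (v : κ → n → R) (T : Finset κ) (h : ∀ i, A i ∈ span R (v '' T)) :
    A.rank ≤ T.card := by
  classical
  rw [A.rank_eq_finrank_span_row]
  calc finrank R (span R (Set.range A.row))
      ≤ finrank R (span R (v '' T)) := finrank_mono (span_le.2 (Set.range_subset_iff.2 h))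
    _ ≤ (T.image v).card := by
        rw [← Finset.coe_image]; exact finrank_span_finset_le_card _
    _ ≤ T.card := card_image_le

theorem Matrix.rank_eq_finrank_span_toLp {𝕜 m n : Type*} [RCLike 𝕜] [Finite m] [Fintype n]
    (A : Matrix m n 𝕜) :
    A.rank = finrank 𝕜 (span 𝕜 (Set.range fun i => (toLp 2 (A i) : EuclideanSpace 𝕜 n))) := by
  rw [A.rank_eq_finrank_span_row, ← (WithLp.linearEquiv 2 𝕜 (n → 𝕜)).symm.finrank_map_eq,
    map_span, ← Set.range_comp]
  rfl

theorem frobSq_eq_sum_norm_sq {m m' : ℕ} (A : Matrix (Fin m) (Fin m') ℝ) :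
    frobSq A = ∑ i, ‖(toLp 2 (A i) : EuclideanSpace ℝ (Fin m'))‖ ^ 2 := by
  simp [frobSq, EuclideanSpace.real_norm_sq_eq]

theorem Matrix.row_eq_sum_smul_of_apply_eq {ι ι' κ : Type*} [Fintype κ] (A : Matrix ι ι' ℝ)
    (c : κ → ℝ) (u : κ → ι → ℝ) (v : κ → ι' → ℝ)
    (hA : ∀ i j, A i j = ∑ k, c k * u k i * v k j) (i : ι) :
    A i = ∑ k, (c k * u k i) • v k := by
  ext j
  simp [hA]

theorem frobSq_eq_sum_sq_of_orthonormal {m m' K : ℕ} {u : Fin K → Fin m → ℝ}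
    {v : Fin K → Fin m' → ℝ}
    (hu : Orthonormal ℝ (fun k => (toLp 2 (u k) : EuclideanSpace ℝ (Fin m))))
    (hv : Orthonormal ℝ (fun k => (toLp 2 (v k) : EuclideanSpace ℝ (Fin m'))))
    (c : Fin K → ℝ) (A : Matrix (Fin m) (Fin m') ℝ)
    (hA : ∀ i j, A i j = ∑ k, c k * u k i * v k j) :
    frobSq A = ∑ k, c k ^ 2 := by
  simp only [frobSq_eq_sum_norm_sq, A.row_eq_sum_smul_of_apply_eq c u v hA, toLp_sum, toLp_smul,
    mul_comm (c _), mul_smul, sum_norm_sq_sum_smul_of_orthonormal hu, norm_smul, hv.norm_eq_one,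
    mul_one, Real.norm_eq_abs, sq_abs]

theorem frobSq_sub_threshold_add_rank_le {m m' K : ℕ} {u : Fin K → Fin m → ℝ}
    {v : Fin K → Fin m' → ℝ}
    (hu : Orthonormal ℝ (fun k => (toLp 2 (u k) : EuclideanSpace ℝ (Fin m))))
    (hv : Orthonormal ℝ (fun k => (toLp 2 (v k) : EuclideanSpace ℝ (Fin m'))))
    {σ : Fin K → ℝ} (hσ0 : ∀ k, 0 ≤ σ k) {α : ℝ} (hα : 0 ≤ α)
    (Rhat Rtil : Matrix (Fin m) (Fin m') ℝ) (hRhat : ∀ i j, Rhat i j = ∑ k, σ k * u k i * v k j)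
    (hRtil : ∀ i j, Rtil i j = ∑ k, (if α < σ k then σ k else 0) * u k i * v k j) :
    frobSq (Rhat - Rtil) + α ^ 2 * Rtil.rank ≤ ∑ k, min (σ k ^ 2) (α ^ 2) := by
  classical
  set T := univ.filter fun k => α < σ k
  have hfrob : frobSq (Rhat - Rtil) = ∑ k, (if α < σ k then 0 else σ k) ^ 2 := by
    refine frobSq_eq_sum_sq_of_orthonormal hu hv _ _ fun i j => ?_
    simp only [Matrix.sub_apply, hRhat, hRtil, ← sum_sub_distrib, ← sub_mul]
    exact sum_congr rfl fun k _ => by split_ifs <;> ring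
  have hrank : Rtil.rank ≤ T.card := by
    refine Rtil.rank_le_card_of_row_mem_span v T fun i => ?_
    rw [Rtil.row_eq_sum_smul_of_apply_eq _ u v hRtil]
    refine sum_mem fun k _ => ?_
    split_ifs with hk
    · exact smul_mem _ _ (subset_span ⟨k, by simpa [T] using hk, rfl⟩)
    · simp
  have hmin : ∀ k, (if α < σ k then 0 else σ k) ^ 2 + α ^ 2 * (if α < σ k then 1 else 0)
      = min (σ k ^ 2) (α ^ 2) := fun k => by
    split_ifs with hk
    · rw [min_eq_right (pow_le_pow_left₀ hα hk.le 2)]; ring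
    · rw [min_eq_left (pow_le_pow_left₀ (hσ0 k) (not_lt.1 hk) 2)]; ring
  calc frobSq (Rhat - Rtil) + α ^ 2 * Rtil.rank
      ≤ ∑ k, (if α < σ k then 0 else σ k) ^ 2 + α ^ 2 * T.card := by
        rw [hfrob]; gcongr
    _ = ∑ k, min (σ k ^ 2) (α ^ 2) := by
        rw [card_filter, Nat.cast_sum, mul_sum, ← sum_add_distrib]
        push_cast
        exact sum_congr rfl fun k _ => hmin k

theorem sum_min_sq_le_frobSq_sub_add_rank {m m' K : ℕ} {u : Fin K → Fin m → ℝ}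
    {v : Fin K → Fin m' → ℝ}
    (hu : Orthonormal ℝ (fun k => (toLp 2 (u k) : EuclideanSpace ℝ (Fin m))))
    (hv : Orthonormal ℝ (fun k => (toLp 2 (v k) : EuclideanSpace ℝ (Fin m'))))
    (σ : Fin K → ℝ) (α : ℝ) (Rhat : Matrix (Fin m) (Fin m') ℝ)
    (hRhat : ∀ i j, Rhat i j = ∑ k, σ k * u k i * v k j) (S : Matrix (Fin m) (Fin m') ℝ) :
    ∑ k, min (σ k ^ 2) (α ^ 2) ≤ frobSq (Rhat - S) + α ^ 2 * S.rank := by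
  set rowS : Fin m → EuclideanSpace ℝ (Fin m') := fun i => toLp 2 (S i)
  have : FiniteDimensional ℝ (span ℝ (Set.range rowS)) :=
    FiniteDimensional.span_of_finite ℝ (Set.finite_range _)
  have hrow : ∀ i, (toLp 2 ((Rhat - S) i) : EuclideanSpace ℝ (Fin m')) =
      ∑ k, (σ k * u k i) • toLp 2 (v k) - rowS i := fun i => by
    rw [show (Rhat - S) i = Rhat i - S i from rfl, Rhat.row_eq_sum_smul_of_apply_eq σ u v hRhat]
    simp [rowS]
  rw [frobSq_eq_sum_norm_sq, S.rank_eq_finrank_span_toLp]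
  simpa only [hrow] using sum_min_sq_le_sum_norm_sq_sub_add_finrank hu hv σ α _ rowS
    fun i => subset_span (Set.mem_range_self i)

theorem statement2_general (m m' K : ℕ) (σ : Fin K → ℝ)
    (u : Fin K → Fin m → ℝ) (v : Fin K → Fin m' → ℝ)
    (hσ0 : ∀ k, 0 ≤ σ k)
    (hu : ∀ k l, (∑ i, u k i * u l i) = if k = l then (1:ℝ) else 0)
    (hv : ∀ k l, (∑ j, v k j * v l j) = if k = l then (1:ℝ) else 0)
    (Rhat Rtil : Matrix (Fin m) (Fin m') ℝ)
    (hRhat : ∀ i j, Rhat i j = ∑ k, σ k * u k i * v k j)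
    (α : ℝ) (hα : 0 < α)
    (hRtil : ∀ i j, Rtil i j = ∑ k, (if α < σ k then σ k else 0) * u k i * v k j) :
    ∀ S : Matrix (Fin m) (Fin m') ℝ,
      frobSq (Rhat - Rtil) + α ^ 2 * (Rtil.rank : ℝ) ≤ frobSq (Rhat - S) + α ^ 2 * (S.rank : ℝ) := by
  intro S
  have hu' := (orthonormal_toLp_iff u).2 hu
  have hv' := (orthonormal_toLp_iff v).2 hv
  calc frobSq (Rhat - Rtil) + α ^ 2 * (Rtil.rank : ℝ) ≤ ∑ k, min (σ k ^ 2) (α ^ 2) :=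
        frobSq_sub_threshold_add_rank_le hu' hv' hσ0 hα.le Rhat Rtil hRhat hRtil
    _ ≤ frobSq (Rhat - S) + α ^ 2 * (S.rank : ℝ) :=
        sum_min_sq_le_frobSq_sub_add_rank hu' hv' σ α Rhat hRhat S

/-- the spectral hard threshold `Rtil(α)` of a matrix `Rhat` with SVD
`Rhat = Σ_k σ_k u_k v_kᵀ` minimizes the rank-penalized criterion
`S ↦ ‖Rhat − S‖_F² + α² rank S`. -/
theorem statement2 (m m' K : ℕ) (σ : Fin K → ℝ)
    (u : Fin K → Fin m → ℝ) (v : Fin K → Fin m' → ℝ)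
    (hσ0 : ∀ k, 0 ≤ σ k) (hσanti : Antitone σ)
    (hu : ∀ k l, (∑ i, u k i * u l i) = if k = l then (1:ℝ) else 0)
    (hv : ∀ k l, (∑ j, v k j * v l j) = if k = l then (1:ℝ) else 0)
    (Rhat Rtil : Matrix (Fin m) (Fin m') ℝ)
    (hRhat : ∀ i j, Rhat i j = ∑ k, σ k * u k i * v k j)
    (α : ℝ) (hα : 0 < α)
    (hRtil : ∀ i j, Rtil i j = ∑ k, (if α < σ k then σ k else 0) * u k i * v k j) :
    ∀ S : Matrix (Fin m) (Fin m') ℝ,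
      frobSq (Rhat - Rtil) + α ^ 2 * (Rtil.rank : ℝ) ≤ frobSq (Rhat - S) + α ^ 2 * (S.rank : ℝ) :=
  statement2_general m m' K σ u v hσ0 hu hv Rhat Rtil hRhat α hα hRtil

end
end

section
/- Let R̂, R be real m × m' matrices and α > 0 with ‖R̂ − R‖_op ≤ α/2. Let R̃ = R̃(α) be the spectral hard threshold of R̂ at level α (equivalently, any minimizer of S ↦ ‖R̂ − S‖_F² + α² rank(S)). Then for every real m × m' matrix S: ‖R̃ − R‖_F² ≤ 3 ‖S − R‖_F² + 4 α² rank(S). -/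
noncomputable section

/-- Spectral (operator) norm of a real matrix, i.e. the operator norm of the induced
linear map between Euclidean spaces. -/
def opNorm {m m' : ℕ} (A : Matrix (Fin m) (Fin m') ℝ) : ℝ :=
  ‖LinearMap.toContinuousLinearMap (Matrix.toEuclideanLin A)‖

/-! Expanding squares,
`‖R̃ - R‖² = ‖S - R‖² + (‖R̂ - R̃‖² - ‖R̂ - S‖²) + 2⟨R̂ - R, R̃ - S⟩`,
and minimality of `R̃` bounds the bracket by `α² (rank S - rank R̃)`. Expanding the rows of
`R̃ - S` in an orthonormal basis of their span and applying Cauchy–Schwarz bounds the cross term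
by `‖R̂ - R‖_op √(rank (R̃ - S)) ‖R̃ - S‖_F`, which is at most
`(α/2) √(rank R̃ + rank S) (‖R̃ - R‖_F + ‖S - R‖_F)`; two AM–GM steps
`α ρ x ≤ (α² ρ² + x²) / 2` absorb it. -/

open Module Finset WithLp
open scoped RealInnerProductSpace

theorem Matrix.rank_sub_le {m n K : Type*} [Field K] [Finite m] [Fintype n]
    (A B : Matrix m n K) : (A - B).rank ≤ A.rank + B.rank := by
  simp only [Matrix.rank_eq_finrank_span_row]
  calc finrank K (Submodule.span K (Set.range (A - B).row))
      ≤ finrank K (Submodule.span K (Set.range A.row) ⊔ Submodule.span K (Set.range B.row) :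
          Submodule K (n → K)) :=
        Submodule.finrank_mono <| Submodule.span_le.2 <| Set.range_subset_iff.2 fun i =>
          Submodule.sub_mem_sup (Submodule.subset_span ⟨i, rfl⟩)
            (Submodule.subset_span ⟨i, rfl⟩)
    _ ≤ _ := Submodule.finrank_add_le_finrank_add_finrank _ _

theorem sum_inner_le_mul_sqrt_finrank_of_mem {ι E : Type*} [Fintype ι] [NormedAddCommGroup E]
    [InnerProductSpace ℝ E] (V : Submodule ℝ E) [FiniteDimensional ℝ V] (d x : ι → E)
    (hx : ∀ i, x i ∈ V) {C : ℝ} (hC : 0 ≤ C)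
    (hd : ∀ v : E, ‖v‖ = 1 → ∑ i, ⟪d i, v⟫ ^ 2 ≤ C ^ 2) :
    ∑ i, ⟪d i, x i⟫ ≤ C * √(finrank ℝ V) * √(∑ i, ‖x i‖ ^ 2) := by
  let b := stdOrthonormalBasis ℝ V
  have hexpand : ∀ i, ⟪d i, x i⟫ = ∑ k, ⟪d i, b k⟫ * ⟪(b k : E), x i⟫ := by
    intro i
    have h := congrArg ((↑) : V → E) (b.sum_repr' ⟨x i, hx i⟩)
    simp only [Submodule.coe_sum, Submodule.coe_smul, Submodule.coe_inner] at h
    conv_lhs => rw [← h]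
    simp only [inner_sum, inner_smul_right, mul_comm]
  have hd' : ∑ k, ∑ i, ⟪d i, b k⟫ ^ 2 ≤ finrank ℝ V * C ^ 2 := by
    calc ∑ k, ∑ i, ⟪d i, b k⟫ ^ 2 ≤ ∑ _k, C ^ 2 :=
          sum_le_sum fun k _ => hd _ ((Submodule.norm_coe _).trans (b.norm_eq_one k))
      _ = _ := by simp
  have hx' : ∀ i, ∑ k, ⟪(b k : E), x i⟫ ^ 2 = ‖x i‖ ^ 2 := fun i => by
    simpa using b.sum_sq_inner_right ⟨x i, hx i⟩
  calc ∑ i, ⟪d i, x i⟫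
        = ∑ p : ι × Fin (finrank ℝ V), ⟪d p.1, b p.2⟫ * ⟪(b p.2 : E), x p.1⟫ := by
        rw [Fintype.sum_prod_type]; exact sum_congr rfl fun i _ => hexpand i
    _ ≤ √(∑ p : ι × Fin (finrank ℝ V), ⟪d p.1, b p.2⟫ ^ 2) *
          √(∑ p : ι × Fin (finrank ℝ V), ⟪(b p.2 : E), x p.1⟫ ^ 2) :=
        Real.sum_mul_le_sqrt_mul_sqrt _ _ _
    _ ≤ √(finrank ℝ V * C ^ 2) * √(∑ i, ‖x i‖ ^ 2) := by
        rw [Fintype.sum_prod_type, Fintype.sum_prod_type, sum_comm]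
        simp only [hx']
        gcongr
    _ = C * √(finrank ℝ V) * √(∑ i, ‖x i‖ ^ 2) := by
        rw [Real.sqrt_mul (by positivity), Real.sqrt_sq hC, mul_comm C]

variable {m n : ℕ}

theorem opNorm_nonneg (A : Matrix (Fin m) (Fin n) ℝ) : 0 ≤ opNorm A :=
  norm_nonneg _

theorem sum_sq_inner_toLp_row (D : Matrix (Fin m) (Fin n) ℝ) (v : EuclideanSpace ℝ (Fin n)) :
    ∑ i, ⟪toLp 2 (D i), v⟫ ^ 2 = ‖Matrix.toEuclideanLin D v‖ ^ 2 := by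
  simp [EuclideanSpace.real_norm_sq_eq, Matrix.mulVec, dotProduct,
    EuclideanSpace.inner_eq_star_dotProduct, mul_comm]

theorem finrank_span_toLp_rows (X : Matrix (Fin m) (Fin n) ℝ) :
    finrank ℝ (Submodule.span ℝ (Set.range fun i => toLp 2 (X i))) = X.rank := by
  have hrows : (Set.range fun i => toLp 2 (X i)) =
      (WithLp.linearEquiv 2 ℝ (Fin n → ℝ)).symm.toLinearMap '' Set.range X.row := by
    rw [← Set.range_comp]; rfl
  rw [hrows, Submodule.span_image, LinearEquiv.finrank_map_eq, Matrix.rank_eq_finrank_span_row]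

theorem frobSq_sub_eq (Y R T S : Matrix (Fin m) (Fin n) ℝ) :
    frobSq (T - R) = frobSq (S - R) + (frobSq (Y - T) - frobSq (Y - S)) +
      2 * ∑ i, ∑ j, (Y - R) i j * (T - S) i j := by
  simp only [frobSq, Matrix.sub_apply, Finset.mul_sum, ← Finset.sum_add_distrib,
    ← Finset.sum_sub_distrib]
  exact sum_congr rfl fun i _ => sum_congr rfl fun j _ => by ring

section Frobenius

attribute [local instance] Matrix.frobeniusNormedAddCommGroup

theorem frobSq_eq_frobenius_norm_sq (A : Matrix (Fin m) (Fin n) ℝ) : frobSq A = ‖A‖ ^ 2 := by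
  simp only [frobSq, Matrix.frobenius_norm_def, Real.rpow_two, Real.norm_eq_abs, sq_abs,
    ← Real.sqrt_eq_rpow]
  rw [Real.sq_sqrt (by positivity)]

theorem frobenius_norm_sq_eq_sum_rows (A : Matrix (Fin m) (Fin n) ℝ) :
    ‖A‖ ^ 2 = ∑ i, ‖toLp 2 (A i)‖ ^ 2 := by
  simp only [← frobSq_eq_frobenius_norm_sq, frobSq, EuclideanSpace.real_norm_sq_eq]

theorem sum_mul_le_opNorm_mul_sqrt_rank_mul_norm (D X : Matrix (Fin m) (Fin n) ℝ) :
    ∑ i, ∑ j, D i j * X i j ≤ opNorm D * √(X.rank : ℝ) * ‖X‖ := by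
  have hD : ∀ v : EuclideanSpace ℝ (Fin n), ‖v‖ = 1 →
      ∑ i, ⟪toLp 2 (D i), v⟫ ^ 2 ≤ opNorm D ^ 2 := by
    intro v hv
    rw [sum_sq_inner_toLp_row, opNorm]
    simpa [hv] using pow_le_pow_left₀ (norm_nonneg _)
      ((LinearMap.toContinuousLinearMap (Matrix.toEuclideanLin D)).le_opNorm v) 2
  have key := sum_inner_le_mul_sqrt_finrank_of_mem
    (Submodule.span ℝ (Set.range fun i => toLp 2 (X i))) (fun i => toLp 2 (D i))
    (fun i => toLp 2 (X i))
    (fun i => Submodule.subset_span ⟨i, rfl⟩) (opNorm_nonneg D) hD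
  rw [finrank_span_toLp_rows, ← frobenius_norm_sq_eq_sum_rows,
    Real.sqrt_sq (norm_nonneg _)] at key
  simpa [EuclideanSpace.inner_eq_star_dotProduct, dotProduct, mul_comm] using key

theorem statement3_general (m m' : ℕ) (Rhat R Rtil : Matrix (Fin m) (Fin m') ℝ)
    (α : ℝ) (hclose : opNorm (Rhat - R) ≤ α / 2)
    (hmin : ∀ S : Matrix (Fin m) (Fin m') ℝ,
      frobSq (Rhat - Rtil) + α ^ 2 * (Rtil.rank : ℝ) ≤ frobSq (Rhat - S) + α ^ 2 * (S.rank : ℝ)) :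
    ∀ S : Matrix (Fin m) (Fin m') ℝ,
      frobSq (Rtil - R) ≤ 3 * frobSq (S - R) + 4 * α ^ 2 * (S.rank : ℝ) := by
  intro S
  have hα : 0 ≤ α / 2 := (opNorm_nonneg _).trans hclose
  have hrank : ((Rtil - S).rank : ℝ) ≤ Rtil.rank + S.rank := by
    exact_mod_cast Matrix.rank_sub_le Rtil S
  have hnorm : ‖Rtil - S‖ ≤ ‖Rtil - R‖ + ‖S - R‖ := by
    simpa using norm_sub_le (Rtil - R) (S - R)
  have hcross : ∑ i, ∑ j, (Rhat - R) i j * (Rtil - S) i j ≤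
      α / 2 * √(Rtil.rank + S.rank : ℝ) * (‖Rtil - R‖ + ‖S - R‖) :=
    (sum_mul_le_opNorm_mul_sqrt_rank_mul_norm _ _).trans (by gcongr)
  have hρ : √(Rtil.rank + S.rank : ℝ) ^ 2 = Rtil.rank + S.rank := Real.sq_sqrt (by positivity)
  have hid := frobSq_sub_eq Rhat R Rtil S
  have hS := hmin S
  simp only [frobSq_eq_frobenius_norm_sq] at hid hS ⊢
  nlinarith [sq_nonneg (α * √(Rtil.rank + S.rank : ℝ) - ‖Rtil - R‖),
    sq_nonneg (α * √(Rtil.rank + S.rank : ℝ) - ‖S - R‖)]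

/-- if `‖Rhat − R‖_op ≤ α/2` and `Rtil` is the spectral hard threshold of `Rhat`
at level `α` (equivalently, any minimizer of `S ↦ ‖Rhat − S‖_F² + α² rank S`), then for every
matrix `S`, `‖Rtil − R‖_F² ≤ 3‖S − R‖_F² + 4α² rank S`. -/
theorem statement3 (m m' : ℕ) (Rhat R Rtil : Matrix (Fin m) (Fin m') ℝ)
    (α : ℝ) (hα : 0 < α) (hclose : opNorm (Rhat - R) ≤ α / 2)
    (hmin : ∀ S : Matrix (Fin m) (Fin m') ℝ,
      frobSq (Rhat - Rtil) + α ^ 2 * (Rtil.rank : ℝ) ≤ frobSq (Rhat - S) + α ^ 2 * (S.rank : ℝ)) :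
    ∀ S : Matrix (Fin m) (Fin m') ℝ,
      frobSq (Rtil - R) ≤ 3 * frobSq (S - R) + 4 * α ^ 2 * (S.rank : ℝ) :=
  statement3_general m m' Rhat R Rtil α hclose hmin

end Frobenius

end
end
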